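/- arXiv:0809.1247 — 2 statements merged into one kernel-verified Lean document; each statement's English description precedes it below -/
import Mathlib

section
/- For all natural numbers m and n, the continued fraction [-1, -1, -2, ..., -2 (m times), -3, -2, ..., -2 (n times)] equals the continued fraction [m+1, n+2], i.e., both equal (m+1) - 1/(n+2) = ((m+1)(n+2) - 1)/(n+2). -/
/-!
Prepending `-2` acts on values of the form `-(t + 1)/t` as the translation `t ↦ t + 1`, and
`[-3, -2, …, -2]` (`n` twos) has this form with `t = (n + 1)/(n + 2)`. Hence the tail after
`-1, -1` has value `-(s + 1)/s` with `s = m + (n + 1)/(n + 2)`, and two leading `-1`s send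
`-(s + 1)/s` back to `s`.
-/

/-- Continued fraction [a₁,...,a_k] = a₁ - 1/[a₂,...,a_k], with [a] = a. -/
def cf : List ℚ → ℚ
  | [] => 0
  | [a] => a
  | a :: l => a - 1 / cf l

lemma cf_cons_of_cf_ne_zero (a : ℚ) {l : List ℚ} (hl : cf l ≠ 0) :
    cf (a :: l) = a - 1 / cf l := by
  cases l with
  | nil => exact absurd rfl hl
  | cons b l => rfl

lemma cf_cons_replicate_neg_two (a : ℚ) (n : ℕ) :
    cf (a :: List.replicate n (-2)) = a + n / (n + 1) := by
  induction n generalizing a with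
  | zero => simp [cf]
  | succ n ih =>
    have hn : (n : ℚ) / (n + 1) < 1 := (div_lt_one (by positivity)).2 (by linarith)
    rw [List.replicate_succ, cf_cons_of_cf_ne_zero a (by rw [ih]; linarith), ih,
      show -2 + (n : ℚ) / (n + 1) = -((n + 2) / (n + 1)) by field_simp; ring]
    push_cast
    field_simp
    ring

lemma neg_add_one_div_ne_zero {t : ℚ} (ht : 0 < t) : -(t + 1) / t ≠ 0 := by
  have : 0 < t + 1 := by positivity
  exact div_ne_zero (by linarith) ht.ne'

lemma cf_replicate_neg_two_append {l : List ℚ} {t : ℚ} (ht : 0 < t) (hl : cf l = -(t + 1) / t)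
    (m : ℕ) : cf (List.replicate m (-2) ++ l) = -(t + m + 1) / (t + m) := by
  induction m with
  | zero => simpa using hl
  | succ m ih =>
    have htm : 0 < t + m := by positivity
    have htm1 : t + m + 1 ≠ 0 := by positivity
    rw [List.replicate_succ, List.cons_append,
      cf_cons_of_cf_ne_zero _ (ih ▸ neg_add_one_div_ne_zero htm), ih]
    push_cast
    field_simp
    ring

lemma cf_neg_one_neg_one_cons {l : List ℚ} {s : ℚ} (hs : 0 < s) (hl : cf l = -(s + 1) / s) :
    cf (-1 :: -1 :: l) = s := by
  have hs1 : s + 1 ≠ 0 := by positivity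
  have hl' : cf (-1 :: l) = -1 / (s + 1) := by
    rw [cf_cons_of_cf_ne_zero _ (hl ▸ neg_add_one_div_ne_zero hs), hl]
    field_simp
    ring
  rw [cf_cons_of_cf_ne_zero _ (by rw [hl']; simpa using hs1), hl']
  field_simp
  ring

theorem stmt_0 (m n : ℕ) :
    cf ([-1, -1] ++ List.replicate m (-2) ++ [-3] ++ List.replicate n (-2))
      = ((m + 1) * (n + 2) - 1) / (n + 2) ∧
    cf ([-1, -1] ++ List.replicate m (-2) ++ [-3] ++ List.replicate n (-2))
      = (m + 1) - 1 / (n + 2) := by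
  have hlist : [-1, -1] ++ List.replicate m (-2) ++ [-3] ++ List.replicate n (-2)
      = (-1 : ℚ) :: -1 :: (List.replicate m (-2) ++ -3 :: List.replicate n (-2)) := by
    simp
  have htail : cf (-3 :: List.replicate n (-2))
      = -((n + 1) / (n + 2) + 1) / ((n + 1) / (n + 2)) := by
    rw [cf_cons_replicate_neg_two]
    field_simp
    ring
  have hvalue := cf_neg_one_neg_one_cons (by positivity)
    (cf_replicate_neg_two_append (by positivity) htail m)
  rw [hlist, hvalue]
  constructor <;> field_simp <;> ring
end

section
/- For every natural number n ≥ 1, the signature of the real symmetric 8×8 matrix G = [[2,-1,0,0,0,0,0,0],[-1,-1,1,0,0,1,0,0],[0,1,-2,1,0,0,0,0],[0,0,1,-2,1,0,0,0],[0,0,0,1,2,0,0,-3],[0,1,0,0,0,-2,1,0],[0,0,0,0,0,1,n+1,-n-2],[0,0,0,0,-3,0,-n-2,n+6]] is 0 (it has exactly 4 positive and 4 negative eigenvalues). -/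
/-!
By (one half of) Sylvester's law of inertia, a subspace on which the quadratic form of a real
symmetric matrix is positive (negative) definite has dimension at most the number of positive
(negative) eigenvalues. For the Goeritz matrix we exhibit explicit `G`-orthogonal families of
four vectors spanning such subspaces of each sign; as there are only eight eigenvalues, exactly
four are positive and four negative.
-/

noncomputable def Goeritz (n : ℕ) : Matrix (Fin 8) (Fin 8) ℝ :=
  !![2, -1, 0, 0, 0, 0, 0, 0;
     -1, -1, 1, 0, 0, 1, 0, 0;
     0, 1, -2, 1, 0, 0, 0, 0;
     0, 0, 1, -2, 1, 0, 0, 0;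
     0, 0, 0, 1, 2, 0, 0, -3;
     0, 1, 0, 0, 0, -2, 1, 0;
     0, 0, 0, 0, 0, 1, (n : ℝ) + 1, -(n : ℝ) - 2;
     0, 0, 0, 0, -3, 0, -(n : ℝ) - 2, (n : ℝ) + 6]

open Matrix Finset

namespace Matrix.IsHermitian

variable {n : Type*} [Fintype n] [DecidableEq n] {A : Matrix n n ℝ} (hA : A.IsHermitian)

/-- `eigenvectorUnitaryᴴ *ᵥ x` is the coordinate vector of `x` in the eigenvector basis. -/
lemma dotProduct_mulVec_self_eq_sum_eigenvalues (x : n → ℝ) :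
    x ⬝ᵥ (A *ᵥ x) =
      ∑ i, hA.eigenvalues i * ((star (hA.eigenvectorUnitary : Matrix n n ℝ) *ᵥ x) i) ^ 2 := by
  set U := (hA.eigenvectorUnitary : Matrix n n ℝ)
  have hAU : A = U * diagonal hA.eigenvalues * star U := by
    simpa [Unitary.conjStarAlgAut_apply] using hA.spectral_theorem
  conv_lhs => rw [hAU]
  rw [← mulVec_mulVec, ← mulVec_mulVec, dotProduct_mulVec, ← mulVec_transpose]
  simp only [star_eq_conjTranspose, conjTranspose_eq_transpose_of_trivial, dotProduct,
    mulVec_diagonal]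
  exact sum_congr rfl fun i _ => by ring

omit [DecidableEq n] in
lemma finrank_le_card_of_forall_apply_eq_zero {V : Type*} [AddCommGroup V] [Module ℝ V]
    [FiniteDimensional ℝ V] (g : V →ₗ[ℝ] n → ℝ) (S : Finset n)
    (hg : ∀ v, (∀ i ∈ S, g v i = 0) → v = 0) : Module.finrank ℝ V ≤ #S := by
  let T : V →ₗ[ℝ] S → ℝ := LinearMap.pi fun i => (LinearMap.proj (i : n)).comp g
  have hT : Function.Injective T := by
    rw [← LinearMap.ker_eq_bot, LinearMap.ker_eq_bot']
    exact fun v hv => hg v fun i hi => congrFun hv ⟨i, hi⟩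
  simpa using LinearMap.finrank_le_finrank_of_injective hT

variable {V : Type*} [AddCommGroup V] [Module ℝ V] [FiniteDimensional ℝ V]

lemma finrank_le_card_eigenvalues_pos (f : V →ₗ[ℝ] n → ℝ)
    (hf : ∀ v ≠ 0, 0 < f v ⬝ᵥ (A *ᵥ f v)) :
    Module.finrank ℝ V ≤ #{i | 0 < hA.eigenvalues i} := by
  refine finrank_le_card_of_forall_apply_eq_zero
    ((star (hA.eigenvectorUnitary : Matrix n n ℝ)).mulVecLin ∘ₗ f) _ fun v hv => ?_
  by_contra hv0
  refine (hf v hv0).not_ge ?_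
  rw [hA.dotProduct_mulVec_self_eq_sum_eigenvalues]
  refine sum_nonpos fun i _ => ?_
  by_cases hi : 0 < hA.eigenvalues i
  · have hvi : (star (hA.eigenvectorUnitary : Matrix n n ℝ) *ᵥ f v) i = 0 :=
      hv i (by simpa using hi)
    simp [hvi]
  · exact mul_nonpos_of_nonpos_of_nonneg (not_lt.mp hi) (sq_nonneg _)

lemma finrank_le_card_eigenvalues_neg (f : V →ₗ[ℝ] n → ℝ)
    (hf : ∀ v ≠ 0, f v ⬝ᵥ (A *ᵥ f v) < 0) :
    Module.finrank ℝ V ≤ #{i | hA.eigenvalues i < 0} := by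
  refine finrank_le_card_of_forall_apply_eq_zero
    ((star (hA.eigenvectorUnitary : Matrix n n ℝ)).mulVecLin ∘ₗ f) _ fun v hv => ?_
  by_contra hv0
  refine (hf v hv0).not_ge ?_
  rw [hA.dotProduct_mulVec_self_eq_sum_eigenvalues]
  refine sum_nonneg fun i _ => ?_
  by_cases hi : hA.eigenvalues i < 0
  · have hvi : (star (hA.eigenvectorUnitary : Matrix n n ℝ) *ᵥ f v) i = 0 :=
      hv i (by simpa using hi)
    simp [hvi]
  · exact mul_nonneg (not_lt.mp hi) (sq_nonneg _)

lemma card_eigenvalues_pos_add_card_eigenvalues_neg_le :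
    #{i | 0 < hA.eigenvalues i} + #{i | hA.eigenvalues i < 0} ≤ Fintype.card n := by
  have hsplit := card_filter_add_card_filter_not (s := univ) (0 < hA.eigenvalues ·)
  have hneg : #{i | hA.eigenvalues i < 0} ≤ #{i | ¬0 < hA.eigenvalues i} :=
    card_le_card (monotone_filter_right _ fun _ _ hi => hi.asymm)
  rw [card_univ] at hsplit
  omega

end Matrix.IsHermitian

lemma Finset.sum_mul_sq_pos {ι : Type*} [Fintype ι] {d c : ι → ℝ} (hd : ∀ i, 0 < d i)
    (hc : c ≠ 0) : 0 < ∑ i, d i * c i ^ 2 := by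
  obtain ⟨j, hj : c j ≠ 0⟩ := Function.ne_iff.mp hc
  exact sum_pos' (fun i _ => mul_nonneg (hd i).le (sq_nonneg _))
    ⟨j, mem_univ j, mul_pos (hd j) (by positivity)⟩

namespace Goeritz

/- Both families are orthogonal for the form of `Goeritz n`, so the form
is diagonal on their spans. -/
noncomputable def posFrame (n : ℕ) : Fin 4 → Fin 8 → ℝ :=
  ![![1, 0, 0, 0, 0, 0, 0, 0],
    ![1, 2, 3, 4, 5, 0, 0, 0],
    ![4, 8, 5, 2, -1, 7, 6, 0],
    ![14 * (n : ℝ) + 25, 28 * (n : ℝ) + 50, 22 * (n : ℝ) + 41, 16 * (n : ℝ) + 32,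
      10 * (n : ℝ) + 23, 20 * (n : ℝ) + 34, 12 * (n : ℝ) + 18, 12 * (n : ℝ) + 26]]

noncomputable def negFrame : Fin 4 → Fin 8 → ℝ :=
  ![![1, 2, 0, 0, 0, 0, 0, 0],
    ![1, 2, 3, 0, 0, 0, 0, 0],
    ![1, 2, 3, 4, 0, 0, 0, 0],
    ![4, 8, 5, 2, -1, 7, 0, 0]]

lemma quadForm_posFrame (n : ℕ) (c : Fin 4 → ℝ) :
    Fintype.linearCombination ℝ (posFrame n) c ⬝ᵥ
        (Goeritz n *ᵥ Fintype.linearCombination ℝ (posFrame n) c) =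
      ∑ i, ![2, 70, 36 * (n : ℝ) + 78, (26 * (n : ℝ) + 51) * (12 * (n : ℝ) + 26)] i *
        c i ^ 2 := by
  simp [Fintype.linearCombination_apply, Goeritz, posFrame, mulVec, dotProduct, Fin.sum_univ_succ]
  ring

lemma quadForm_negFrame (n : ℕ) (c : Fin 4 → ℝ) :
    Fintype.linearCombination ℝ negFrame c ⬝ᵥ
        (Goeritz n *ᵥ Fintype.linearCombination ℝ negFrame c) =
      -∑ i, ![6, 12, 20, 42] i * c i ^ 2 := by
  simp [Fintype.linearCombination_apply, Goeritz, negFrame, mulVec, dotProduct, Fin.sum_univ_succ]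
  ring

end Goeritz

theorem stmt_11_general (n : ℕ) (hG : (Goeritz n).IsHermitian) :
    (Finset.univ.filter fun i => 0 < hG.eigenvalues i).card = 4 ∧
    (Finset.univ.filter fun i => hG.eigenvalues i < 0).card = 4 := by
  have hpos := hG.finrank_le_card_eigenvalues_pos
    (Fintype.linearCombination ℝ (Goeritz.posFrame n)) fun c hc => by
      rw [Goeritz.quadForm_posFrame]
      exact sum_mul_sq_pos (fun i => by fin_cases i <;> simp <;> positivity) hc
  have hneg := hG.finrank_le_card_eigenvalues_neg
    (Fintype.linearCombination ℝ Goeritz.negFrame) fun c hc => by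
      rw [Goeritz.quadForm_negFrame, neg_neg_iff_pos]
      exact sum_mul_sq_pos (fun i => by fin_cases i <;> norm_num) hc
  have htotal := hG.card_eigenvalues_pos_add_card_eigenvalues_neg_le
  rw [Module.finrank_fin_fun] at hpos hneg
  rw [Fintype.card_fin] at htotal
  omega

theorem stmt_11 (n : ℕ) (hn : 1 ≤ n) (hG : (Goeritz n).IsHermitian) :
    (Finset.univ.filter fun i => 0 < hG.eigenvalues i).card = 4 ∧
    (Finset.univ.filter fun i => hG.eigenvalues i < 0).card = 4 :=
  stmt_11_general n hG
end
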